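/- arXiv:1911.11053 — 6 statements merged into one kernel-verified Lean document; each statement's English description precedes it below -/
import Mathlib

section
/- For every n ≥ 4 and every h with 2 ≤ h ≤ n−1, there exists an add-MARA instance with n agents and n objects and an allocation π that is ((h+1)-app envy)-free but not (h-app envy)-free. In particular, (K-app envy)-freeness of an allocation does not imply ((K−1)-app envy)-freeness for K ≥ 3. -/
open Finset

/-- Utility that agent `i` assigns to the bundle held by agent `k` under
allocation `π` (an allocation maps each object to the agent receiving it). -/
def bundleUtil {n m : ℕ} (u : Fin n → Fin m → ℚ) (π : Fin m → Fin n)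
    (i k : Fin n) : ℚ :=
  ∑ o ∈ Finset.univ.filter (fun o => π o = k), u i o

/-- Agent `i` `K`-app envies agent `j` in `π`: there is a set of `K` agents
including `i`, each of whom values `j`'s bundle strictly more than `i`'s. -/
def KAppEnvies {n m : ℕ} (u : Fin n → Fin m → ℚ) (π : Fin m → Fin n)
    (K : ℕ) (i j : Fin n) : Prop :=
  ∃ S : Finset (Fin n), S.card = K ∧ i ∈ S ∧
    ∀ k ∈ S, bundleUtil u π k i < bundleUtil u π k j

/-- An allocation is (`K`-app envy)-free if no agent `K`-app envies another. -/
def KAppEnvyFree {n m : ℕ} (u : Fin n → Fin m → ℚ) (π : Fin m → Fin n)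
    (K : ℕ) : Prop :=
  ∀ i j : Fin n, i ≠ j → ¬ KAppEnvies u π K i j

/-! Any witness that `i` `K`-app envies `j` lies inside the set of agents preferring `j`'s bundle
to `i`'s, and that set is itself a witness whenever it contains `i`. Give each agent its own
object and let only agents `0, …, h - 1` care about anything: they value object `1` at one.
Then at most these `h` agents prefer one bundle to another, and all of them prefer bundle `1`
to bundle `0`, so agent `0` `h`-app envies agent `1` while no envy is shared by `h + 1` agents. -/

def enviers {n m : ℕ} (u : Fin n → Fin m → ℚ) (π : Fin m → Fin n) (i j : Fin n) :
    Finset (Fin n) :=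
  {k | bundleUtil u π k i < bundleUtil u π k j}

section Enviers

variable {n m : ℕ} {u : Fin n → Fin m → ℚ} {π : Fin m → Fin n}

lemma KAppEnvies.le_card_enviers {K : ℕ} {i j : Fin n} (h : KAppEnvies u π K i j) :
    K ≤ #(enviers u π i j) := by
  obtain ⟨S, rfl, -, hS⟩ := h
  exact card_le_card fun k hk => by simpa [enviers] using hS k hk

lemma kAppEnvies_card_enviers {i j : Fin n} (hi : i ∈ enviers u π i j) :
    KAppEnvies u π #(enviers u π i j) i j :=
  ⟨enviers u π i j, rfl, hi, fun k hk => by simpa [enviers] using hk⟩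

lemma kAppEnvyFree_of_card_enviers_lt {K : ℕ} (h : ∀ i j, i ≠ j → #(enviers u π i j) < K) :
    KAppEnvyFree u π K :=
  fun i j hij henvy => (henvy.le_card_enviers.trans_lt (h i j hij)).false

lemma not_kAppEnvyFree_card_enviers {i j : Fin n} (hij : i ≠ j) (hi : i ∈ enviers u π i j) :
    ¬ KAppEnvyFree u π #(enviers u π i j) :=
  fun hfree => hfree i j hij (kAppEnvies_card_enviers hi)

end Enviers

lemma bundleUtil_id {n : ℕ} (u : Fin n → Fin n → ℚ) (i k : Fin n) :
    bundleUtil u id i k = u i k := by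
  simp [bundleUtil, filter_eq']

section LowAgents

variable {n : ℕ} (h : ℕ)

def lowAgentsUtil : Fin n → Fin n → ℚ := fun k o => if (k : ℕ) < h ∧ (o : ℕ) = 1 then 1 else 0

lemma lowAgentsUtil_nonneg (k o : Fin n) : 0 ≤ lowAgentsUtil h k o := by
  unfold lowAgentsUtil; split_ifs <;> norm_num

lemma enviers_lowAgentsUtil_subset (i j : Fin n) :
    enviers (lowAgentsUtil h) id i j ⊆ ({k | (k : ℕ) < h} : Finset (Fin n)) := by
  intro k
  by_cases hk : (k : ℕ) < h <;> simp [enviers, bundleUtil_id, lowAgentsUtil, hk]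

lemma enviers_lowAgentsUtil_of_val_eq_one {i j : Fin n} (hi : (i : ℕ) ≠ 1) (hj : (j : ℕ) = 1) :
    enviers (lowAgentsUtil h) id i j = ({k | (k : ℕ) < h} : Finset (Fin n)) := by
  ext k
  by_cases hk : (k : ℕ) < h <;> simp [enviers, bundleUtil_id, lowAgentsUtil, hi, hj, hk]

end LowAgents

theorem hplus1_free_not_h_free_general (n h : ℕ) (hh : 2 ≤ h) (hhn : h ≤ n - 1) :
    ∃ (u : Fin n → Fin n → ℚ) (π : Fin n → Fin n),
      (∀ i j, 0 ≤ u i j) ∧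
      KAppEnvyFree u π (h + 1) ∧ ¬ KAppEnvyFree u π h := by
  have card_low : #{k : Fin n | (k : ℕ) < h} = h := by rw [Fin.card_filter_val_lt]; omega
  refine ⟨lowAgentsUtil h, id, lowAgentsUtil_nonneg h, ?_, ?_⟩
  · refine kAppEnvyFree_of_card_enviers_lt fun i j _ => ?_
    have := card_le_card (enviers_lowAgentsUtil_subset h i j)
    omega
  · let a0 : Fin n := ⟨0, by omega⟩
    let a1 : Fin n := ⟨1, by omega⟩
    have henviers : enviers (lowAgentsUtil h) id a0 a1 = ({k | (k : ℕ) < h} : Finset (Fin n)) :=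
      enviers_lowAgentsUtil_of_val_eq_one h zero_ne_one rfl
    have h0 : a0 ∈ enviers (lowAgentsUtil h) id a0 a1 := by
      rw [henviers, mem_filter_univ]; simp only [a0]; omega
    simpa only [henviers, card_low] using
      not_kAppEnvyFree_card_enviers (by simp [a0, a1, Fin.ext_iff]) h0

theorem hplus1_free_not_h_free (n h : ℕ) (hn : 4 ≤ n) (hh : 2 ≤ h) (hhn : h ≤ n - 1) :
    ∃ (u : Fin n → Fin n → ℚ) (π : Fin n → Fin n),
      (∀ i j, 0 ≤ u i j) ∧
      KAppEnvyFree u π (h + 1) ∧ ¬ KAppEnvyFree u π h :=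
  hplus1_free_not_h_free_general n h hh hhn
end

section
/- There exists an add-MARA instance in which every agent assigns utilities such that one object o_1 satisfies u(i,1) > Σ_{k≥2} u(i,k) for all agents a_i, and in any such instance, every complete allocation exhibits unanimous envy: for any allocation, some agent n-app envies the agent holding o_1. Hence the instance is not (K-app envy)-free for any K. -/
open Finset

/-!
If every agent values `o₁` more than all other objects together, then in any allocation every
agent prefers the bundle containing `o₁` to any other bundle, since that other bundle is a set of
objects different from `o₁`. So any agent not holding `o₁`, together with any `K - 1` others,
`K`-app envies the holder of `o₁`; as `n ≥ 2`, such an agent exists.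
-/

section Allocation

variable {n m : ℕ} {u : Fin n → Fin m → ℚ} {π : Fin m → Fin n}

lemma bundleUtil_le_sum_ne (hu : ∀ i o, 0 ≤ u i o) {o₁ : Fin m} {i : Fin n} (hi : i ≠ π o₁)
    (k : Fin n) : bundleUtil u π k i ≤ ∑ o ∈ univ.filter (fun o => o ≠ o₁), u k o := by
  refine sum_le_sum_of_subset_of_nonneg (fun o ho => ?_) (fun o _ _ => hu k o)
  simp only [mem_filter, mem_univ, true_and] at ho ⊢
  rintro rfl
  exact hi ho.symm

lemma le_bundleUtil_self (hu : ∀ i o, 0 ≤ u i o) (k : Fin n) (o : Fin m) :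
    u k o ≤ bundleUtil u π k (π o) :=
  single_le_sum (fun o _ => hu k o) (by simp)

lemma bundleUtil_lt_of_dominant (hu : ∀ i o, 0 ≤ u i o) {o₁ : Fin m}
    (hdom : ∀ k, ∑ o ∈ univ.filter (fun o => o ≠ o₁), u k o < u k o₁)
    {i : Fin n} (hi : i ≠ π o₁) (k : Fin n) :
    bundleUtil u π k i < bundleUtil u π k (π o₁) :=
  calc bundleUtil u π k i ≤ ∑ o ∈ univ.filter (fun o => o ≠ o₁), u k o :=
        bundleUtil_le_sum_ne hu hi k
    _ < u k o₁ := hdom k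
    _ ≤ bundleUtil u π k (π o₁) := le_bundleUtil_self hu k o₁

lemma kAppEnvies_of_forall_lt {i j : Fin n} (h : ∀ k, bundleUtil u π k i < bundleUtil u π k j)
    {K : ℕ} (hK : 1 ≤ K) (hKn : K ≤ n) : KAppEnvies u π K i j := by
  obtain ⟨S, hiS, hS⟩ := exists_superset_card_eq (s := {i})
    (by simpa using hK) (by simpa using hKn)
  exact ⟨S, hS, hiS (mem_singleton_self i), fun k _ => h k⟩

lemma not_kAppEnvyFree_of_kAppEnvies {K : ℕ} {i j : Fin n} (hij : i ≠ j)
    (h : KAppEnvies u π K i j) : ¬ KAppEnvyFree u π K :=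
  fun hfree => hfree i j hij h

end Allocation

theorem unanimous_envy_instance :
    (∃ (n m : ℕ) (hn : 2 ≤ n) (hm : 1 ≤ m) (u : Fin n → Fin m → ℚ),
        (∀ i j, 0 ≤ u i j) ∧
        (∀ i : Fin n,
          (∑ k ∈ Finset.univ.filter (fun k => k ≠ (⟨0, hm⟩ : Fin m)), u i k)
            < u i ⟨0, hm⟩)) ∧
    (∀ (n m : ℕ) (hn : 2 ≤ n) (hm : 1 ≤ m) (u : Fin n → Fin m → ℚ),
        (∀ i j, 0 ≤ u i j) →
        (∀ i : Fin n,
          (∑ k ∈ Finset.univ.filter (fun k => k ≠ (⟨0, hm⟩ : Fin m)), u i k)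
            < u i ⟨0, hm⟩) →
        ∀ π : Fin m → Fin n,
          (∃ i : Fin n, i ≠ π ⟨0, hm⟩ ∧ KAppEnvies u π n i (π ⟨0, hm⟩)) ∧
          ∀ K : ℕ, 1 ≤ K → K ≤ n → ¬ KAppEnvyFree u π K) := by
  refine ⟨⟨2, 1, le_rfl, le_rfl, fun _ _ => 1, fun _ _ => zero_le_one, fun i => ?_⟩, ?_⟩
  · simp [Fin.eq_zero]
  · intro n m hn hm u hu hdom π
    have : Nontrivial (Fin n) := Fin.nontrivial_iff_two_le.mpr hn
    obtain ⟨i, hi⟩ := exists_ne (π ⟨0, hm⟩)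
    have envies : ∀ K, 1 ≤ K → K ≤ n → KAppEnvies u π K i (π ⟨0, hm⟩) := fun _ =>
      kAppEnvies_of_forall_lt (bundleUtil_lt_of_dominant hu hdom hi)
    exact ⟨⟨i, hi, envies n (by omega) le_rfl⟩,
      fun K hK hKn => not_kAppEnvyFree_of_kAppEnvies hi (envies K hK hKn)⟩
end

section
/- Let π be an allocation and π' be obtained from π by a weakly improving reallocation cycle (each agent in the cycle weakly prefers her new bundle, at least one strictly). Then the degree of envy strictly decreases: de(π') < de(π). -/
open Finset

/-- Degree of envy of the society. -/
def degEnvy {n m : ℕ} (u : Fin n → Fin m → ℚ) (π : Fin m → Fin n) : ℚ :=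
  ∑ i : Fin n, ∑ j : Fin n, max 0 (bundleUtil u π i j - bundleUtil u π i i)

/-!
After the exchange, agent `i` faces the same bundles as before, only relabelled by `σ`, while
her own reference value rises from `u_i(π_i)` to `u_i(π_{σ i})`. Each term `max 0 (u_i(π_j) - ·)`
is antitone in the reference value, and for an agent who strictly improves, the positive envy
she had towards the bundle `π_{σ i}` disappears.
-/

section EnvySum

variable {ι α : Type*} [Fintype ι] [AddCommGroup α] [LinearOrder α] [IsOrderedAddMonoid α]

theorem sum_max_zero_sub_le_sum_max_zero_sub (v : ι → α) {a b : α} (hab : a ≤ b) :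
    ∑ j, max 0 (v j - b) ≤ ∑ j, max 0 (v j - a) :=
  sum_le_sum fun _ _ => max_le_max le_rfl (sub_le_sub_left hab _)

theorem sum_max_zero_sub_lt_sum_max_zero_sub (v : ι → α) {a : α} (j₀ : ι) (h : a < v j₀) :
    ∑ j, max 0 (v j - v j₀) < ∑ j, max 0 (v j - a) := by
  refine sum_lt_sum (fun _ _ => max_le_max le_rfl (sub_le_sub_left h.le _)) ⟨j₀, mem_univ _, ?_⟩
  rw [sub_self, max_self]
  exact lt_max_of_lt_right (sub_pos.mpr h)

end EnvySum

theorem bundleUtil_perm_symm_comp {n m : ℕ} (u : Fin n → Fin m → ℚ) (π : Fin m → Fin n)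
    (σ : Equiv.Perm (Fin n)) (i k : Fin n) :
    bundleUtil u (fun o => σ.symm (π o)) i k = bundleUtil u π i (σ k) := by
  simp only [bundleUtil, Equiv.symm_apply_eq]

theorem degEnvy_perm_symm_comp {n m : ℕ} (u : Fin n → Fin m → ℚ) (π : Fin m → Fin n)
    (σ : Equiv.Perm (Fin n)) :
    degEnvy u (fun o => σ.symm (π o)) =
      ∑ i, ∑ j, max 0 (bundleUtil u π i j - bundleUtil u π i (σ i)) := by
  simp only [degEnvy, bundleUtil_perm_symm_comp]
  exact sum_congr rfl fun i _ =>
    Fintype.sum_equiv σ _ (fun j => max 0 (bundleUtil u π i j - bundleUtil u π i (σ i)))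
      fun _ => rfl

/-- Agent `i` receives the former bundle of agent `σ i`. -/
theorem weakly_improving_cycle_decreases_degEnvy_general {n m : ℕ}
    (u : Fin n → Fin m → ℚ) (π : Fin m → Fin n) (σ : Equiv.Perm (Fin n))
    (hweak : ∀ i : Fin n, bundleUtil u π i i ≤ bundleUtil u π i (σ i))
    (hstrict : ∃ i : Fin n, bundleUtil u π i i < bundleUtil u π i (σ i)) :
    degEnvy u (fun o => σ.symm (π o)) < degEnvy u π := by
  obtain ⟨i₀, hi₀⟩ := hstrict
  rw [degEnvy_perm_symm_comp]
  exact sum_lt_sum (fun i _ => sum_max_zero_sub_le_sum_max_zero_sub _ (hweak i))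
    ⟨i₀, mem_univ _, sum_max_zero_sub_lt_sum_max_zero_sub _ (σ i₀) hi₀⟩

/-- A weakly improving reallocation cycle (given by the cyclic permutation σ,
agent i receives the former bundle of agent σ i) strictly decreases the degree
of envy. -/
theorem weakly_improving_cycle_decreases_degEnvy {n m : ℕ}
    (u : Fin n → Fin m → ℚ) (π : Fin m → Fin n) (σ : Equiv.Perm (Fin n))
    (hcyc : σ.IsCycle)
    (hweak : ∀ i : Fin n, bundleUtil u π i i ≤ bundleUtil u π i (σ i))
    (hstrict : ∃ i : Fin n, bundleUtil u π i i < bundleUtil u π i (σ i)) :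
    degEnvy u (fun o => σ.symm (π o)) < degEnvy u π :=
  weakly_improving_cycle_decreases_degEnvy_general u π σ hweak hstrict
end

section
/- If an add-MARA instance admits a (2-app envy)-free allocation, then it also admits an envy-free allocation. -/
open Finset

/-!
Only the bundles of a 2-app envy-free allocation are needed; they are reassigned by a
permutation. While some agent `a` envies, `a` swaps bundles with the holder `j` of its favourite
bundle. Since `a` envies `j`, 2-app envy-freeness makes every other agent, `j` in particular,
weakly prefer `a`'s bundle to `j`'s: so nobody is worse off, `a` stops envying, and one checks
that 2-app envy-freeness survives the swap. The set of envious agents therefore shrinks strictly.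
-/

section BundleAssignment

variable {ι α : Type*} [LinearOrder α] (V : ι → ι → α)

/-- `V l k` is agent `l`'s value for bundle `k`, and agent `a` holds bundle `σ a`. -/
def TwoAppEnvyFree (σ : Equiv.Perm ι) : Prop :=
  ∀ a y l, V a (σ a) < V a y → l ≠ a → V l y ≤ V l (σ a)

def enviousAgents [Fintype ι] (σ : Equiv.Perm ι) : Finset ι :=
  {a | ∃ y, V a (σ a) < V a y}

variable {V}

theorem enviousAgents_subset_of_le [Fintype ι] {σ τ : Equiv.Perm ι}
    (h : ∀ k, V k (σ k) ≤ V k (τ k)) : enviousAgents V τ ⊆ enviousAgents V σ := by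
  intro k hk
  simp only [enviousAgents, Finset.mem_filter, Finset.mem_univ, true_and] at hk ⊢
  obtain ⟨y, hy⟩ := hk
  exact ⟨y, (h k).trans_lt hy⟩

theorem TwoAppEnvyFree.mul_swap [DecidableEq ι] {σ : Equiv.Perm ι} (hσ : TwoAppEnvyFree V σ)
    {a j : ι} (htop : ∀ y, V a y ≤ V a (σ j)) (henvy : V a (σ a) < V a (σ j)) :
    TwoAppEnvyFree V (σ * Equiv.swap a j) := by
  have hja : j ≠ a := by rintro rfl; exact henvy.false
  intro x y l hxy hlx
  simp only [Equiv.Perm.mul_apply] at hxy ⊢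
  rcases eq_or_ne x a with rfl | hxa
  · rw [Equiv.swap_apply_left] at hxy
    exact absurd hxy (htop y).not_gt
  rcases eq_or_ne j x with rfl | hjx
  · rw [Equiv.swap_apply_right] at hxy ⊢
    have hjj : V j (σ j) ≤ V j (σ a) := hσ a (σ j) j henvy hja
    rcases eq_or_ne a l with rfl | hal
    · by_contra! hay
      exact (hσ a y j hay hja).not_gt hxy
    · calc V l y ≤ V l (σ j) := hσ j y l (hjj.trans_lt hxy) hlx
        _ ≤ V l (σ a) := hσ a (σ j) l henvy hal.symm
  · rw [Equiv.swap_apply_of_ne_of_ne hxa hjx.symm] at hxy ⊢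
    exact hσ x y l hxy hlx

theorem TwoAppEnvyFree.le_mul_swap [DecidableEq ι] {σ : Equiv.Perm ι} (hσ : TwoAppEnvyFree V σ)
    {a j : ι} (henvy : V a (σ a) < V a (σ j)) (k : ι) :
    V k (σ k) ≤ V k ((σ * Equiv.swap a j) k) := by
  have hja : j ≠ a := by rintro rfl; exact henvy.false
  rw [Equiv.Perm.mul_apply]
  rcases eq_or_ne k a with rfl | hka
  · rw [Equiv.swap_apply_left]; exact henvy.le
  rcases eq_or_ne k j with rfl | hkj
  · rw [Equiv.swap_apply_right]; exact hσ a (σ k) k henvy hja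
  · rw [Equiv.swap_apply_of_ne_of_ne hka hkj]

theorem TwoAppEnvyFree.exists_envyFree [Fintype ι] [DecidableEq ι] {σ : Equiv.Perm ι}
    (hσ : TwoAppEnvyFree V σ) : ∃ τ : Equiv.Perm ι, ∀ i k, V i k ≤ V i (τ i) := by
  by_cases hfree : ∀ i k, V i k ≤ V i (σ i)
  · exact ⟨σ, hfree⟩
  push Not at hfree
  obtain ⟨a, y, hay⟩ := hfree
  obtain ⟨t, -, htop⟩ := Finset.exists_max_image Finset.univ (V a) ⟨y, Finset.mem_univ y⟩
  set j := σ.symm t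
  have htop : ∀ y, V a y ≤ V a (σ j) := by simpa [j] using htop
  have henvy : V a (σ a) < V a (σ j) := hay.trans_le (htop y)
  have ha : a ∈ enviousAgents V σ := Finset.mem_filter.mpr ⟨Finset.mem_univ a, y, hay⟩
  have ha' : a ∉ enviousAgents V (σ * Equiv.swap a j) := by
    rw [enviousAgents, Finset.mem_filter]
    simpa using htop
  have hsub : enviousAgents V (σ * Equiv.swap a j) ⊂ enviousAgents V σ :=
    (Finset.ssubset_iff_of_subset (enviousAgents_subset_of_le (hσ.le_mul_swap henvy))).mpr
      ⟨a, ha, ha'⟩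
  exact TwoAppEnvyFree.exists_envyFree (hσ.mul_swap htop henvy)
termination_by (enviousAgents V σ).card
decreasing_by exact Finset.card_lt_card hsub

end BundleAssignment

theorem bundleUtil_perm_comp {n m : ℕ} (u : Fin n → Fin m → ℚ) (π : Fin m → Fin n)
    (σ : Equiv.Perm (Fin n)) (l k : Fin n) :
    bundleUtil u (σ ∘ π) l k = bundleUtil u π l (σ.symm k) := by
  simp only [bundleUtil, Function.comp_apply, Equiv.eq_symm_apply]

theorem twoAppEnvyFree_of_kAppEnvyFree_two {n m : ℕ} {u : Fin n → Fin m → ℚ}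
    {π : Fin m → Fin n} (hπ : KAppEnvyFree u π 2) : TwoAppEnvyFree (bundleUtil u π) 1 := by
  intro a y l hay hla
  rw [Equiv.Perm.one_apply] at hay ⊢
  by_contra! hly
  have hay' : a ≠ y := by rintro rfl; exact hay.false
  refine hπ a y hay' ⟨{a, l}, Finset.card_pair hla.symm, Finset.mem_insert_self a _, ?_⟩
  simp only [Finset.mem_insert, Finset.mem_singleton]
  rintro k (rfl | rfl) <;> assumption

theorem two_app_free_implies_envy_free {n m : ℕ} (u : Fin n → Fin m → ℚ)
    (h : ∃ π : Fin m → Fin n, KAppEnvyFree u π 2) :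
    ∃ π : Fin m → Fin n, ∀ i j : Fin n,
      bundleUtil u π i j ≤ bundleUtil u π i i := by
  obtain ⟨π, hπ⟩ := h
  obtain ⟨τ, hτ⟩ := (twoAppEnvyFree_of_kAppEnvyFree_two hπ).exists_envyFree
  refine ⟨τ.symm ∘ π, fun i j => ?_⟩
  simpa [bundleUtil_perm_comp] using hτ i (τ j)
end

section
/- In a House Allocation instance (n agents, n objects, each agent receives exactly one object), the instance is a unanimous envy instance if and only if there exists a pair of objects (o_a, o_b) such that every agent strictly prefers o_a to o_b, i.e., u(i,a) > u(i,b) for all agents a_i. -/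
open Finset

/-- In a House Allocation instance (allocation = bijection `σ` from agents to
objects), agent `i` `K`-app envies agent `j`: there is a set of `K` agents
including `i`, each of whom strictly prefers `j`'s object to `i`'s object. -/
def HKAppEnvies {n : ℕ} (u : Fin n → Fin n → ℚ) (σ : Equiv.Perm (Fin n))
    (K : ℕ) (i j : Fin n) : Prop :=
  ∃ S : Finset (Fin n), S.card = K ∧ i ∈ S ∧ ∀ k ∈ S, u k (σ i) < u k (σ j)

/-- A house allocation is (`K`-app envy)-free if no agent `K`-app envies another. -/
def HKAppEnvyFree {n : ℕ} (u : Fin n → Fin n → ℚ) (σ : Equiv.Perm (Fin n))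
    (K : ℕ) : Prop :=
  ∀ i j : Fin n, i ≠ j → ¬ HKAppEnvies u σ K i j

/- With `n` agents, `n`-app envy of `i` towards `j` means that every agent prefers `j`'s object
to `i`'s. Since an allocation is a bijection, a pair of distinct agents is the same as a pair of
distinct objects, so in every allocation some agent `n`-app envies another exactly when some
object is unanimously preferred to another; this does not depend on the allocation. -/

theorem hKAppEnvies_card_iff {n : ℕ} (u : Fin n → Fin n → ℚ) (σ : Equiv.Perm (Fin n))
    (i j : Fin n) : HKAppEnvies u σ n i j ↔ ∀ k, u k (σ i) < u k (σ j) := by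
  constructor
  · rintro ⟨S, hS, -, hlt⟩ k
    have hSuniv : S = univ := eq_univ_of_card S (by rw [hS, Fintype.card_fin])
    exact hlt k (hSuniv ▸ mem_univ k)
  · intro hlt
    exact ⟨univ, card_fin n, mem_univ i, fun k _ => hlt k⟩

theorem exists_hKAppEnvies_card_iff {n : ℕ} (u : Fin n → Fin n → ℚ) (σ : Equiv.Perm (Fin n)) :
    (∃ i j : Fin n, i ≠ j ∧ HKAppEnvies u σ n i j) ↔
      ∃ a b : Fin n, a ≠ b ∧ ∀ k : Fin n, u k b < u k a := by
  simp only [hKAppEnvies_card_iff]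
  constructor
  · rintro ⟨i, j, hij, hlt⟩
    exact ⟨σ j, σ i, σ.injective.ne hij.symm, hlt⟩
  · rintro ⟨a, b, hab, hlt⟩
    refine ⟨σ.symm b, σ.symm a, σ.symm.injective.ne hab.symm, ?_⟩
    simpa only [Equiv.apply_symm_apply] using hlt

theorem hap_unanimous_iff_dominated_pair {n : ℕ} (u : Fin n → Fin n → ℚ) :
    (∀ σ : Equiv.Perm (Fin n), ∃ i j : Fin n, i ≠ j ∧ HKAppEnvies u σ n i j) ↔
      ∃ a b : Fin n, a ≠ b ∧ ∀ i : Fin n, u i b < u i a :=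
  ⟨fun h => (exists_hKAppEnvies_card_iff u 1).1 (h 1),
    fun h σ => (exists_hKAppEnvies_card_iff u σ).2 h⟩
end

section
/- There exists an add-MARA instance and a (K-app envy)-free allocation π (for some 3 ≤ K ≤ n−1) such that after performing an improving bundle swap between two agents (each strictly prefers the other's bundle), the resulting allocation π' is only (K'-app envy)-free for some K' > K and is not (K-app envy)-free. That is, improving swaps can strictly increase the minimal approval-envy level. -/
/-!
Give each of four agents one object. Before the swap no envy is shared by three agents. After
agents 0 and 1 exchange their objects, agents 0, 2 and 3 all value agent 2's object above agent 0's
new one, so agent 0 envies agent 2 at level 3, while no envy is shared by all four agents.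
-/

open Finset

theorem bundleUtil_equiv {n m : ℕ} (u : Fin n → Fin m → ℚ) (σ : Fin m ≃ Fin n) (i k : Fin n) :
    bundleUtil u σ i k = u i (σ.symm k) := by
  have hbundle : univ.filter (fun o => σ o = k) = {σ.symm k} := by
    ext o
    simp [← σ.eq_symm_apply]
  rw [bundleUtil, hbundle, sum_singleton]

theorem kAppEnvies_iff {n m : ℕ} {u : Fin n → Fin m → ℚ} {π : Fin m → Fin n} {K : ℕ}
    (hK : K ≠ 0) {i j : Fin n} :
    KAppEnvies u π K i j ↔ bundleUtil u π i i < bundleUtil u π i j ∧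
      K ≤ #{k | bundleUtil u π k i < bundleUtil u π k j} := by
  constructor
  · rintro ⟨S, rfl, hiS, hS⟩
    exact ⟨hS i hiS, card_le_card fun k hk => mem_filter.2 ⟨mem_univ k, hS k hk⟩⟩
  · rintro ⟨hi, hcard⟩
    obtain ⟨S, hiS, hSenvious, rfl⟩ := exists_subsuperset_card_eq
      (singleton_subset_iff.2 (mem_filter.2 ⟨mem_univ i, hi⟩))
      (by simpa [Nat.one_le_iff_ne_zero] using hK) hcard
    exact ⟨S, rfl, singleton_subset_iff.1 hiS, fun k hk => (mem_filter.1 (hSenvious hk)).2⟩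

def swapExampleUtility : Fin 4 → Fin 4 → ℕ :=
  ![![1, 2, 3, 0], ![2, 1, 0, 0], ![3, 0, 2, 0], ![0, 1, 2, 2]]

theorem improving_swap_can_increase_kapp_level :
    ∃ (n m : ℕ) (u : Fin n → Fin m → ℚ) (π : Fin m → Fin n)
      (i j : Fin n) (K K' : ℕ),
      i ≠ j ∧ 3 ≤ K ∧ K ≤ n - 1 ∧ K < K' ∧
      (∀ a b, 0 ≤ u a b) ∧
      KAppEnvyFree u π K ∧
      bundleUtil u π i i < bundleUtil u π i j ∧
      bundleUtil u π j j < bundleUtil u π j i ∧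
      ¬ KAppEnvyFree u (fun o => Equiv.swap i j (π o)) K ∧
      KAppEnvyFree u (fun o => Equiv.swap i j (π o)) K' := by
  let u : Fin 4 → Fin 4 → ℚ := fun a b => swapExampleUtility a b
  have hid := bundleUtil_equiv u (Equiv.refl _)
  have hswap := bundleUtil_equiv u (Equiv.swap 0 1)
  simp only [Equiv.coe_refl, Equiv.refl_symm, Equiv.refl_apply, Equiv.symm_swap] at hid hswap
  refine ⟨4, 4, u, id, 0, 1, 3, 4, by decide, le_rfl, le_rfl, by decide,
    fun a b => Nat.cast_nonneg _, ?_, ?_, ?_, ?_, ?_⟩ <;>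
  simp only [KAppEnvyFree, kAppEnvies_iff three_ne_zero, kAppEnvies_iff four_ne_zero, id, hid,
    hswap, u, Nat.cast_lt] <;>
  decide
end
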